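/- arXiv:2109.01452 — 2 statements merged into one kernel-verified Lean document; each statement's English description precedes it below -/
import Mathlib

section
/- Let 0<q<1 and let (a_{2k})_{k≥0} be real numbers with a_0 ≠ 0. Define p_n(z) = Σ_{k=0}^n qbinom(2n+1, 2k+1) · a_{2(n-k)}/[2(n-k)+1]_q · z^{2k+1}, where qbinom denotes the q-binomial coefficient and [m]_q = (1-q^m)/(1-q). Then p_n satisfies the q-difference equation D_q² p_n(z) = [2n+1]_q [2n]_q p_{n-1}(z) for all n ≥ 1, where D_q f(z) = (f(z) - f(qz))/((1-q)z). -/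
noncomputable def qNum (q : ℝ) (m : ℕ) : ℝ := (1 - q ^ m) / (1 - q)

noncomputable def qFact (q : ℝ) (m : ℕ) : ℝ := ∏ j ∈ Finset.range m, qNum q (j + 1)

noncomputable def qBinom (q : ℝ) (n k : ℕ) : ℝ := qFact q n / (qFact q k * qFact q (n - k))

noncomputable def Dq (q : ℝ) (f : ℝ → ℝ) (z : ℝ) : ℝ :=
  if z = 0 then deriv f 0 else (f z - f (q * z)) / ((1 - q) * z)

noncomputable def jacksonIntegral01 (q : ℝ) (f : ℝ → ℝ) : ℝ :=
  (1 - q) * ∑' j : ℕ, q ^ j * f (q ^ j)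

lemma qNum_pos {q : ℝ} (hq0 : 0 < q) (hq1 : q < 1) (m : ℕ) (hm : 1 ≤ m) :
    0 < qNum q m := by
  have h1 : q ^ m < 1 := pow_lt_one₀ hq0.le hq1 (by omega)
  have : (0:ℝ) < 1 - q := by linarith
  exact div_pos (by linarith) this

lemma qFact_pos {q : ℝ} (hq0 : 0 < q) (hq1 : q < 1) (m : ℕ) :
    0 < qFact q m := by
  refine Finset.prod_pos fun j _ => qNum_pos hq0 hq1 _ (by omega)

lemma qFact_succ (q : ℝ) (m : ℕ) : qFact q (m + 1) = qFact q m * qNum q (m + 1) := by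
  rw [qFact, Finset.prod_range_succ, qFact]

lemma Dq_poly {q : ℝ} (hq : q ≠ 1) (f : ℝ → ℝ) (C : ℝ) (m : ℕ) (c : ℕ → ℝ) (e : ℕ → ℕ)
    (hf : ∀ z, f z = C + ∑ k ∈ Finset.range m, c k * z ^ e k)
    (he : ∀ k ∈ Finset.range m, 1 ≤ e k) :
    ∀ z, Dq q f z = ∑ k ∈ Finset.range m, c k * qNum q (e k) * z ^ (e k - 1) := by
  have h1q : (1 : ℝ) - q ≠ 0 := sub_ne_zero.mpr (Ne.symm hq)
  intro z
  rw [Dq]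
  split_ifs with hz
  · subst hz
    have hF : f = fun z => C + ∑ k ∈ Finset.range m, c k * z ^ e k := funext hf
    rw [hF]
    have hder : HasDerivAt (fun z : ℝ => C + ∑ k ∈ Finset.range m, c k * z ^ e k)
        (∑ k ∈ Finset.range m, c k * ((e k : ℝ) * (0:ℝ) ^ (e k - 1))) 0 := by
      apply HasDerivAt.const_add
      exact HasDerivAt.fun_sum fun k hk => (hasDerivAt_pow (e k) 0).const_mul (c k)
    rw [hder.deriv]
    refine Finset.sum_congr rfl fun k hk => ?_
    obtain ⟨j, hj⟩ : ∃ j, e k = j + 1 := ⟨e k - 1, by have := he k hk; omega⟩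
    rw [hj]
    cases j with
    | zero => simp [qNum, h1q, div_self h1q]
    | succ i => simp
  · rw [hf z, hf (q * z), add_sub_add_left_eq_sub, ← Finset.sum_sub_distrib,
      Finset.sum_div]
    refine Finset.sum_congr rfl fun k hk => ?_
    obtain ⟨j, hj⟩ : ∃ j, e k = j + 1 := ⟨e k - 1, by have := he k hk; omega⟩
    rw [hj, Nat.add_sub_cancel, qNum, mul_pow]
    field_simp
    ring

lemma key {q : ℝ} (hq0 : 0 < q) (hq1 : q < 1) (m k : ℕ) (hk : k ≤ m) :
    qBinom q (2*(m+1)+1) (2*(k+1)+1) * qNum q (2*(k+1)+1) * qNum q (2*k+2)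
      = qNum q (2*(m+1)+1) * qNum q (2*(m+1)) * qBinom q (2*m+1) (2*k+1) := by
  have fA : qFact q (2*(m+1)+1) = qFact q (2*m+1) * qNum q (2*m+2) * qNum q (2*m+3) := by
    rw [show 2*(m+1)+1 = (2*m+1)+1+1 by omega, qFact_succ, qFact_succ,
      show 2*m+1+1 = 2*m+2 by omega, show 2*m+1+1+1 = 2*m+3 by omega]
  have fB : qFact q (2*(k+1)+1) = qFact q (2*k+1) * qNum q (2*k+2) * qNum q (2*k+3) := by
    rw [show 2*(k+1)+1 = (2*k+1)+1+1 by omega, qFact_succ, qFact_succ,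
      show 2*k+1+1 = 2*k+2 by omega, show 2*k+1+1+1 = 2*k+3 by omega]
  have e3 : 2*(m+1)+1 - (2*(k+1)+1) = (2*m+1) - (2*k+1) := by omega
  rw [qBinom, qBinom, fA, fB, e3,
    show 2*(k+1)+1 = 2*k+3 by omega, show 2*(m+1)+1 = 2*m+3 by omega,
    show 2*(m+1) = 2*m+2 by omega]
  have p1 := (qFact_pos hq0 hq1 (2*k+1)).ne'
  have p2 := (qNum_pos hq0 hq1 (2*k+2) (by omega)).ne'
  have p3 := (qNum_pos hq0 hq1 (2*k+3) (by omega)).ne'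
  have p4 := (qFact_pos hq0 hq1 ((2*m+1) - (2*k+1))).ne'
  field_simp

theorem stmt0 (q : ℝ) (hq0 : 0 < q) (hq1 : q < 1) (a : ℕ → ℝ) (ha : a 0 ≠ 0)
    (p : ℕ → ℝ → ℝ)
    (hp : ∀ n z, p n z = ∑ k ∈ Finset.range (n + 1),
      qBinom q (2 * n + 1) (2 * k + 1) * (a (2 * (n - k)) / qNum q (2 * (n - k) + 1)) *
        z ^ (2 * k + 1)) :
    ∀ n, 1 ≤ n → ∀ z,
      Dq q (Dq q (p n)) z = qNum q (2 * n + 1) * qNum q (2 * n) * p (n - 1) z := by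
  have hq : q ≠ 1 := ne_of_lt hq1
  intro n hn z
  obtain ⟨m, rfl⟩ : ∃ m, n = m + 1 := ⟨n - 1, by omega⟩
  set c : ℕ → ℝ := fun k =>
    qBinom q (2 * (m+1) + 1) (2 * k + 1) * (a (2 * ((m+1) - k)) / qNum q (2 * ((m+1) - k) + 1)) with hc
  have h1 : ∀ w, Dq q (p (m+1)) w = ∑ k ∈ Finset.range (m+2),
      c k * qNum q (2*k+1) * w ^ (2*k+1-1) :=
    Dq_poly hq (p (m+1)) 0 (m+2) c (fun k => 2*k+1)
      (fun w => by rw [hp (m+1) w, zero_add]) (fun k _ => Nat.le_add_left 1 (2*k))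
  have h2 : ∀ w, Dq q (p (m+1)) w = (c 0 * qNum q 1) + ∑ k ∈ Finset.range (m+1),
      (c (k+1) * qNum q (2*(k+1)+1)) * w ^ (2*k+2) := by
    intro w
    rw [h1 w, Finset.sum_range_succ', add_comm]
    refine congrArg₂ (· + ·) (by norm_num) (Finset.sum_congr rfl fun k _ => ?_)
    rw [show 2*(k+1)+1-1 = 2*k+2 by omega]
  have h3 := Dq_poly hq (Dq q (p (m+1))) (c 0 * qNum q 1) (m+1)
    (fun k => c (k+1) * qNum q (2*(k+1)+1)) (fun k => 2*k+2) h2 (fun k _ => le_trans (by norm_num) (Nat.le_add_left 2 (2*k)))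
  rw [h3 z, hp ((m+1)-1) z, show (m+1)-1 = m from rfl, Finset.mul_sum]
  refine Finset.sum_congr rfl fun k hk => ?_
  have hkm : k ≤ m := by simp at hk; omega
  rw [show 2*k+2-1 = 2*k+1 by omega]
  have hkey := key hq0 hq1 m k hkm
  rw [hc]
  simp only []
  rw [show 2 * ((m+1) - (k+1)) = 2 * (m - k) by omega]
  linear_combination (a (2*(m-k)) / qNum q (2*(m-k)+1) * z ^ (2*k+1)) * hkey
end

section
/- Let 0<q<1 and let (γ_{2n})_{n≥0}, (ξ_{2n})_{n≥0} be real sequences with γ_0 ≠ 0 satisfying Σ_{j=0}^n γ_{2j} ξ_{2(n-j)}/([2j]_q![2(n-j)]_q!) = δ_{n,0} for all n ≥ 0. Define ω_n(z) = Σ_{k=0}^n qbinom(2n,2k) γ_{2(n-k)} z^{2k}. Then z^{2n} = Σ_{k=0}^n qbinom(2n,2k) ξ_{2(n-k)} ω_k(z) for all n ≥ 0, and consequently ω_n(z) = (1/ξ_0)[z^{2n} - Σ_{k=0}^{n-1} qbinom(2n,2k) ξ_{2(n-k)} ω_k(z)]. -/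
theorem stmt15 (q : ℝ) (hq0 : 0 < q) (hq1 : q < 1) (γ ξ : ℕ → ℝ) (hγ : γ 0 ≠ 0)
    (hconv : ∀ n : ℕ, ∑ j ∈ Finset.range (n + 1),
      γ (2 * j) * ξ (2 * (n - j)) / (qFact q (2 * j) * qFact q (2 * (n - j)))
        = if n = 0 then 1 else 0)
    (ω : ℕ → ℝ → ℝ)
    (hω : ∀ n z, ω n z = ∑ k ∈ Finset.range (n + 1),
      qBinom q (2 * n) (2 * k) * γ (2 * (n - k)) * z ^ (2 * k)) :
    (∀ n : ℕ, ∀ z : ℝ, z ^ (2 * n) = ∑ k ∈ Finset.range (n + 1),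
      qBinom q (2 * n) (2 * k) * ξ (2 * (n - k)) * ω k z) ∧
    (∀ n : ℕ, ∀ z : ℝ, ω n z = (1 / ξ 0) *
      (z ^ (2 * n) - ∑ k ∈ Finset.range n,
        qBinom q (2 * n) (2 * k) * ξ (2 * (n - k)) * ω k z)) := by
  have hFpos : ∀ m, 0 < qFact q m := by
    intro m
    apply Finset.prod_pos
    intro j _
    have h1 : q ^ (j + 1) < 1 := pow_lt_one₀ hq0.le hq1 (Nat.succ_ne_zero j)
    exact div_pos (by linarith) (by linarith)
  have hF : ∀ m, qFact q m ≠ 0 := fun m => (hFpos m).ne'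
  have hF0 : qFact q 0 = 1 := by simp [qFact]
  have hξ0 : γ 0 * ξ 0 = 1 := by
    have h := hconv 0
    norm_num [hF0] at h
    exact h
  have hξ0ne : ξ 0 ≠ 0 := by
    intro h; rw [h, mul_zero] at hξ0; norm_num at hξ0
  have main : ∀ n : ℕ, ∀ z : ℝ, z ^ (2 * n) = ∑ k ∈ Finset.range (n + 1),
      qBinom q (2 * n) (2 * k) * ξ (2 * (n - k)) * ω k z := by
    intro n z
    have expand : ∑ k ∈ Finset.range (n + 1), qBinom q (2 * n) (2 * k) * ξ (2 * (n - k)) * ω k z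
        = ∑ k ∈ Finset.range (n + 1), ∑ i ∈ Finset.range (k + 1),
            qBinom q (2 * n) (2 * k) * ξ (2 * (n - k)) *
              (qBinom q (2 * k) (2 * i) * γ (2 * (k - i)) * z ^ (2 * i)) := by
      refine Finset.sum_congr rfl fun k _ => ?_
      rw [hω, Finset.mul_sum]
    have swap : ∑ k ∈ Finset.range (n + 1), ∑ i ∈ Finset.range (k + 1),
            qBinom q (2 * n) (2 * k) * ξ (2 * (n - k)) *
              (qBinom q (2 * k) (2 * i) * γ (2 * (k - i)) * z ^ (2 * i))
        = ∑ i ∈ Finset.range (n + 1), ∑ k ∈ Finset.Ico i (n + 1),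
            qBinom q (2 * n) (2 * k) * ξ (2 * (n - k)) *
              (qBinom q (2 * k) (2 * i) * γ (2 * (k - i)) * z ^ (2 * i)) := by
      simp only [Finset.range_eq_Ico]
      rw [← Finset.sum_Ico_Ico_comm 0 (n + 1) (fun i k =>
          qBinom q (2 * n) (2 * k) * ξ (2 * (n - k)) *
            (qBinom q (2 * k) (2 * i) * γ (2 * (k - i)) * z ^ (2 * i)))]
    have inner : ∀ i ∈ Finset.range (n + 1),
        (∑ k ∈ Finset.Ico i (n + 1),
            qBinom q (2 * n) (2 * k) * ξ (2 * (n - k)) *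
              (qBinom q (2 * k) (2 * i) * γ (2 * (k - i)) * z ^ (2 * i)))
        = if i = n then z ^ (2 * n) else 0 := by
      intro i hi
      have hin : i ≤ n := Nat.lt_succ_iff.mp (Finset.mem_range.mp hi)
      set m := n - i with hm
      rw [Finset.sum_Ico_eq_sum_range]
      have hrange : n + 1 - i = m + 1 := by omega
      rw [hrange]
      have term : ∀ j ∈ Finset.range (m + 1),
          qBinom q (2 * n) (2 * (i + j)) * ξ (2 * (n - (i + j))) *
            (qBinom q (2 * (i + j)) (2 * i) * γ (2 * ((i + j) - i)) * z ^ (2 * i))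
          = (z ^ (2 * i) * (qFact q (2 * n) / qFact q (2 * i))) *
            (γ (2 * j) * ξ (2 * (m - j)) / (qFact q (2 * j) * qFact q (2 * (m - j)))) := by
        intro j hj
        have hjm : j ≤ m := Nat.lt_succ_iff.mp (Finset.mem_range.mp hj)
        have e1 : 2 * n - 2 * (i + j) = 2 * (m - j) := by omega
        have e2 : 2 * (i + j) - 2 * i = 2 * j := by omega
        have e3 : 2 * (n - (i + j)) = 2 * (m - j) := by omega
        have e4 : 2 * ((i + j) - i) = 2 * j := by omega
        rw [e3, e4]
        unfold qBinom
        rw [e1, e2]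
        field_simp [hF (2 * n), hF (2 * i), hF (2 * j), hF (2 * (m - j)), hF (2 * (i + j))]
      rw [Finset.sum_congr rfl term, ← Finset.mul_sum, hconv m]
      by_cases h : i = n
      · have hm0 : m = 0 := by omega
        rw [if_pos h, if_pos hm0, mul_one, h, div_self (hF (2 * n)), mul_one]
      · have hm0 : m ≠ 0 := by omega
        rw [if_neg h, if_neg hm0, mul_zero]
    rw [expand, swap, Finset.sum_congr rfl inner, Finset.sum_ite_eq'
      (Finset.range (n + 1)) n (fun _ => z ^ (2 * n)),
      if_pos (Finset.self_mem_range_succ n)]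
  refine ⟨main, fun n z => ?_⟩
  have h := main n z
  rw [Finset.sum_range_succ] at h
  have hB : qBinom q (2 * n) (2 * n) = 1 := by
    unfold qBinom
    rw [Nat.sub_self, hF0, mul_one, div_self (hF (2 * n))]
  rw [hB, Nat.sub_self, Nat.mul_zero, one_mul] at h
  field_simp
  linarith
end
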